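/- arXiv:math/9506205 — 2 statements merged into one kernel-verified Lean document; each statement's English description precedes it below -/
import Mathlib

section
/- If G is a recursively presented finitely generated group admitting a rational structure with uniqueness (a regular language L over a finite inverse-closed generating alphabet A mapping bijectively onto G under the natural evaluation map), then the word problem for G is solvable: the set of words over A representing the identity is decidable. -/
/-!
A word `w` fails to represent `1` exactly when some `v ∈ L`, other than the representative `w₀`
of `1`, has the same value as `w`. Membership in `L` is decidable since `L` is regular, and
`π v = π w` is r.e. because it says that the word `v⁻¹ w` is trivial, where `v⁻¹` is spelled
with words representing the inverses of the generators (they exist as `π` is onto). Projecting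
away `v` keeps the predicate r.e., so `w ≠ 1` is r.e. as well as `w = 1`, and the word problem is
decidable by Post's theorem.
-/

/-- Evaluation of a word over the alphabet `A` in the group `G`. -/
def evalWord {A G : Type} [Group G] (a : A → G) (w : List A) : G :=
  (w.map a).prod

/-- A language is regular if it is accepted by a DFA with finitely many states. -/
def IsRegularLang {A : Type} (L : Language A) : Prop :=
  ∃ (σ : Type) (_ : Fintype σ) (M : DFA A σ), M.accepts = L

open Encodable Nat.Partrec.Code

section Computability

variable {α β : Type*} [Primcodable α] [Primcodable β]

theorem REPred.comp {p : β → Prop} (hp : REPred p) {f : α → β} (hf : Computable f) :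
    REPred fun a => p (f a) :=
  Partrec.comp hp hf

theorem REPred.and {p q : α → Prop} (hp : REPred p) (hq : REPred q) :
    REPred fun a => p a ∧ q a := by
  have := Partrec.bind (g := fun a (_ : Unit) => Part.assert (q a) fun _ => Part.some ()) hp
    (Partrec.comp hq Computable.fst)
  exact (Partrec.dom_re this).of_eq fun a => by simp [Part.dom_iff_mem]

theorem ComputablePred.rePred_exists {r : α → β → Prop}
    (hr : ComputablePred fun q : α × β => r q.1 q.2) : REPred fun a => ∃ b, r a b := by
  classical
  have hf : Computable₂ fun (a : α) (n : ℕ) =>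
      Option.casesOn (motive := fun _ => Bool) (decode (α := β) n) false
        fun b => decide (r a b) :=
    Computable.option_casesOn (Computable.decode.comp Computable.snd) (Computable.const false)
      (hr.decide.comp (Computable.pair (Computable.fst.comp Computable.fst) Computable.snd)).to₂
  refine (Partrec.rfind hf.partrec₂).dom_re.of_eq fun a => ?_
  simp only [Nat.rfind_dom, PFun.coe_val, Part.mem_some_iff, Part.some_dom, implies_true,
    and_true]
  constructor
  · rintro ⟨n, hn⟩
    cases hb : decode (α := β) n with
    | none => simp [hb] at hn
    | some b => exact ⟨b, by simpa [hb] using hn⟩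
  · rintro ⟨b, hb⟩
    exact ⟨encode b, by simpa [encodek] using hb⟩

/-- Kleene normal form: an r.e. predicate is the projection of a computable relation. -/
theorem REPred.exists_computablePred_nat {p : α → Prop} (hp : REPred p) :
    ∃ r : α → ℕ → Prop, ComputablePred (fun q : α × ℕ => r q.1 q.2) ∧
      ∀ a, p a ↔ ∃ n, r a n := by
  obtain ⟨c, hc⟩ := exists_code.1 hp
  refine ⟨fun a n => (evaln n c (encode a)).isSome, ?_, fun a => ?_⟩
  · refine Primrec.primrecPred ?_ |>.computablePred
    exact (Primrec.eq.comp (Primrec.option_isSome.comp (primrec_evaln.comp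
      (Primrec.pair (Primrec.pair Primrec.snd (Primrec.const c))
        (Primrec.encode.comp Primrec.fst)))) (Primrec.const true)).decide.of_eq fun _ => rfl
  · have : p a ↔ (eval c (encode a)).Dom := by simp [hc, encodek, Part.assert]
    simp only [this, Part.dom_iff_mem, evaln_complete, Option.isSome_iff_exists]
    exact ⟨fun ⟨x, k, h⟩ => ⟨k, x, h⟩, fun ⟨k, x, h⟩ => ⟨x, k, h⟩⟩

theorem REPred.exists {p : α → β → Prop} (hp : REPred fun q : α × β => p q.1 q.2) :
    REPred fun a => ∃ b, p a b := by
  obtain ⟨r, hr, hpr⟩ := hp.exists_computablePred_nat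
  have : ComputablePred fun q : α × (β × ℕ) => r (q.1, q.2.1) q.2.2 := by
    obtain ⟨_, hr⟩ := hr
    exact (hr.comp (Computable.pair (Computable.pair Computable.fst
      (Computable.fst.comp Computable.snd)) (Computable.snd.comp Computable.snd))).computablePred
  refine (ComputablePred.rePred_exists (r := fun a (bn : β × ℕ) => r (a, bn.1) bn.2) this).of_eq
    fun a => ?_
  simp only [Prod.exists]
  exact exists_congr fun b => (hpr (a, b)).symm

end Computability

theorem DFA.computablePred_mem_accepts {A σ : Type*} [Primcodable A] [Finite A] [Finite σ]
    (M : DFA A σ) : ComputablePred (· ∈ M.accepts) := by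
  classical
  obtain ⟨n, ⟨e⟩⟩ := Finite.exists_equiv_fin σ
  let : Primcodable σ := Primcodable.ofEquiv (Fin n) e
  have heval : Primrec M.eval :=
    Primrec.list_foldl Primrec.id (Primrec.const M.start)
      ((Primrec.dom_finite fun q : σ × A => M.step q.1 q.2).comp Primrec.snd).to₂
  exact ((Primrec.dom_finite fun s => decide (s ∈ M.accept)).comp heval).primrecPred
    |>.computablePred

theorem IsRegularLang.computablePred {A : Type} [Primcodable A] [Finite A] {L : Language A}
    (hL : IsRegularLang L) : ComputablePred (· ∈ L) := by
  obtain ⟨σ, _, M, rfl⟩ := hL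
  exact M.computablePred_mem_accepts

section evalWord

variable {A G : Type} [Group G] {a : A → G}

theorem evalWord_cons (x : A) (w : List A) : evalWord a (x :: w) = a x * evalWord a w :=
  List.prod_cons

theorem evalWord_append (u v : List A) :
    evalWord a (u ++ v) = evalWord a u * evalWord a v := by
  simp [evalWord]

theorem evalWord_reverse_flatMap {inv : A → List A}
    (hinv : ∀ x, evalWord a (inv x) = (a x)⁻¹) (v : List A) :
    evalWord a (v.reverse.flatMap inv) = (evalWord a v)⁻¹ := by
  induction v with
  | nil => simp [evalWord]
  | cons x t ih => simp [evalWord_append, evalWord_cons, ih, hinv]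

theorem rePred_evalWord_eq [Primcodable A] [Finite A]
    (h1 : REPred fun w : List A => evalWord a w = 1) {inv : A → List A}
    (hinv : ∀ x, evalWord a (inv x) = (a x)⁻¹) :
    REPred fun p : List A × List A => evalWord a p.1 = evalWord a p.2 := by
  have hinvWord : Primrec fun p : List A × List A => p.1.reverse.flatMap inv :=
    Primrec.list_flatMap (Primrec.list_reverse.comp Primrec.fst)
      ((Primrec.dom_finite inv).comp Primrec.snd).to₂
  refine (h1.comp (Primrec.list_append.comp hinvWord Primrec.snd).to_comp).of_eq fun p => ?_
  rw [evalWord_append, evalWord_reverse_flatMap hinv, inv_mul_eq_one]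

end evalWord

theorem Set.InjOn.apply_ne_iff_exists_mem_ne {X Y : Type*} {f : X → Y} {s : Set X}
    (hinj : InjOn f s) (hsurj : SurjOn f s univ) {x₀ : X} (hx₀ : x₀ ∈ s) (x : X) :
    f x ≠ f x₀ ↔ ∃ v ∈ s, v ≠ x₀ ∧ f x = f v := by
  constructor
  · intro hx
    obtain ⟨v, hv, hvx⟩ := hsurj (mem_univ (f x))
    exact ⟨v, hv, fun h => hx (h ▸ hvx).symm, hvx.symm⟩
  · rintro ⟨v, hv, hvx₀, hxv⟩ hx
    exact hvx₀ (hinj hv hx₀ (hxv.symm.trans hx))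

theorem word_problem_solvable_of_rational_structure_with_uniqueness_general
    {A G : Type} [Fintype A] [Primcodable A] [Group G] (a : A → G)
    (hrecpres : REPred (fun w : List A => evalWord a w = 1))
    (L : Language A) (hreg : IsRegularLang L)
    (hbij : ∀ g : G, ∃! w, w ∈ L ∧ evalWord a w = g) :
    ComputablePred (fun w : List A => evalWord a w = 1) := by
  have hsurj : Set.SurjOn (evalWord a) L Set.univ := fun g _ => (hbij g).exists
  have hinj : Set.InjOn (evalWord a) L := fun v hv w hw hvw =>
    (hbij _).unique ⟨hv, hvw⟩ ⟨hw, rfl⟩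
  obtain ⟨w₀, hw₀L, hw₀⟩ := hsurj (Set.mem_univ 1)
  choose inv _ hinv using fun x => hsurj (Set.mem_univ (a x)⁻¹)
  have hL : REPred (· ∈ L) := hreg.computablePred.to_re
  have hne₀ : REPred (· ≠ w₀) :=
    (Primrec.eq.comp Primrec.id (Primrec.const w₀)).not.computablePred.to_re
  have hne : REPred fun w => evalWord a w ≠ 1 := by
    refine (REPred.exists (p := fun w v => (v ∈ L ∧ v ≠ w₀) ∧ evalWord a w = evalWord a v)
      (((hL.comp Computable.snd).and (hne₀.comp Computable.snd)).and
        (rePred_evalWord_eq hrecpres hinv))).of_eq fun w => ?_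
    rw [← hw₀, hinj.apply_ne_iff_exists_mem_ne hsurj hw₀L]
    simp only [and_assoc]
    rfl
  exact ComputablePred.computable_iff_re_compl_re'.2 ⟨hrecpres, hne⟩

/-- If a recursively presented finitely generated group admits a rational structure with
uniqueness, then its word problem is solvable. -/
theorem word_problem_solvable_of_rational_structure_with_uniqueness
    {A G : Type} [Fintype A] [Primcodable A] [Group G] (a : A → G)
    (hinv : ∀ x : A, ∃ y : A, a y = (a x)⁻¹)
    (hrecpres : REPred (fun w : List A => evalWord a w = 1))
    (L : Language A) (hreg : IsRegularLang L)
    (hbij : ∀ g : G, ∃! w, w ∈ L ∧ evalWord a w = g) :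
    ComputablePred (fun w : List A => evalWord a w = 1) :=
  word_problem_solvable_of_rational_structure_with_uniqueness_general a hrecpres L hreg hbij
end

section
/- Let (L, A) be a rational structure on a group G and H ≤ G a subgroup. If H is L-rational (L ∩ π^{-1}(H) is a regular language), then H is L-quasiconvex: there exists K > 0 such that for every w ∈ L with π(w) ∈ H and every prefix w_t of w, there is a word u_t over A of length at most K with π(w_t u_t) ∈ H. -/
/-! Take an `n`-state DFA recognising `L ∩ π⁻¹(H)` and a word `p ++ t` it accepts. Cutting loops
out of the run on `t` leaves a word `u` of length `< n` leading from the state reached after `p` to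
the same accept state, so `p ++ u ∈ L ∩ π⁻¹(H)`; thus `K = n` works. -/

namespace DFA

variable {α σ : Type} [Fintype σ] (M : DFA α σ)

theorem exists_length_lt_card_evalFrom_eq (s : σ) (t : List α) :
    ∃ u : List α, u.length < Fintype.card σ ∧ M.evalFrom s u = M.evalFrom s t := by
  by_cases hlen : t.length < Fintype.card σ
  · exact ⟨t, hlen, rfl⟩
  obtain ⟨q, x, y, z, rfl, -, hy, hx, hloop, -⟩ := M.evalFrom_split (s := s) (not_lt.1 hlen) rfl
  have hcut : M.evalFrom s (x ++ z) = M.evalFrom s (x ++ y ++ z) := by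
    simp only [evalFrom_of_append, hx, hloop]
  obtain ⟨u, hu, hus⟩ := exists_length_lt_card_evalFrom_eq s (x ++ z)
  exact ⟨u, hu, hus.trans hcut⟩
termination_by t.length
decreasing_by
  simp only [List.length_append, *]
  have := List.length_pos_iff.2 hy
  omega

theorem exists_length_lt_card_append_mem_accepts {p t : List α} (h : p ++ t ∈ M.accepts) :
    ∃ u : List α, u.length < Fintype.card σ ∧ p ++ u ∈ M.accepts := by
  obtain ⟨u, hu, hut⟩ := M.exists_length_lt_card_evalFrom_eq (M.eval p) t
  refine ⟨u, hu, ?_⟩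
  rw [mem_accepts, eval, evalFrom_of_append] at h ⊢
  exact hut ▸ h

end DFA

theorem quasiconvex_of_rational_general
    {A G : Type} [Group G] (a : A → G)
    (L : Language A)
    (H : Subgroup G)
    (hrat : IsRegularLang {w | w ∈ L ∧ evalWord a w ∈ H}) :
    ∃ K : ℕ, 0 < K ∧ ∀ w ∈ L, evalWord a w ∈ H → ∀ p : List A, p <+: w →
      ∃ u : List A, u.length ≤ K ∧ evalWord a (p ++ u) ∈ H := by
  obtain ⟨σ, _, M, hM⟩ := hrat
  have hσ : 0 < Fintype.card σ := Fintype.card_pos_iff.2 ⟨M.start⟩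
  refine ⟨Fintype.card σ, hσ, ?_⟩
  rintro w hw hwH p ⟨t, rfl⟩
  have hpt : p ++ t ∈ M.accepts := hM ▸ ⟨hw, hwH⟩
  obtain ⟨u, hu, hpu⟩ := M.exists_length_lt_card_append_mem_accepts hpt
  exact ⟨u, hu.le, (hM ▸ hpu : p ++ u ∈ {w | w ∈ L ∧ evalWord a w ∈ H}).2⟩

/-- An `L`-rational subgroup is `L`-quasiconvex. -/
theorem quasiconvex_of_rational
    {A G : Type} [Fintype A] [Group G] (a : A → G)
    (hinv : ∀ x : A, ∃ y : A, a y = (a x)⁻¹)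
    (L : Language A) (hreg : IsRegularLang L)
    (hsur : ∀ g : G, ∃ w ∈ L, evalWord a w = g)
    (H : Subgroup G)
    (hrat : IsRegularLang {w | w ∈ L ∧ evalWord a w ∈ H}) :
    ∃ K : ℕ, 0 < K ∧ ∀ w ∈ L, evalWord a w ∈ H → ∀ p : List A, p <+: w →
      ∃ u : List A, u.length ≤ K ∧ evalWord a (p ++ u) ∈ H :=
  quasiconvex_of_rational_general a L H hrat
end
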